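/- Let μ be a residue-transcendental Krull valuation on K̄[x] with K̄ algebraically closed. Then there exist a ∈ K̄ and δ = μ(x−a) ∈ μK̄ such that μ = μ_{a,δ}, i.e., μ equals the monomial valuation with respect to x−a. -/

import Mathlib

open Polynomial

variable {K : Type*} [Field K] {Γ : Type*} [AddCommGroup Γ] [LinearOrder Γ] [IsOrderedAddMonoid Γ]

/-- The `i`-th coefficient of the `q`-expansion of `f`. -/
noncomputable def qCoeff (q f : Polynomial K) (i : ℕ) : Polynomial K :=
  f / q ^ i % q

/-- The truncation `ν_q` of `w` at `q` :
`ν_q(f) = min_i ν(f_i q^i)` over the `q`-expansion `f = Σ f_i q^i`. -/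
noncomputable def trunc (w : Polynomial K → WithTop Γ) (q f : Polynomial K) : WithTop Γ :=
  (Finset.range (f.natDegree + 1)).inf fun i => w (qCoeff q f i * q ^ i)

/-- `b` is an admissible index in the definition of `ε(f)`. -/
def ValidIdx (w : Polynomial K → WithTop Γ) (f : Polynomial K) (b : ℕ) : Prop :=
  1 ≤ b ∧ b ≤ f.natDegree ∧ w f ≠ ⊤ ∧ w (Polynomial.hasseDeriv b f) ≠ ⊤

/-- `(w(g) - w(∂_c g))/c ≤ (w(f) - w(∂_b f))/b`, written multiplicatively
(cross-multiplied) to stay inside `WithTop Γ`. -/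
def RatioLE (w : Polynomial K → WithTop Γ) (g : Polynomial K) (c : ℕ)
    (f : Polynomial K) (b : ℕ) : Prop :=
  b • w g + c • w (Polynomial.hasseDeriv b f) ≤ c • w f + b • w (Polynomial.hasseDeriv c g)

/-- `f` is a generator of the support of `w`. -/
def IsGenSupp (w : Polynomial K → WithTop Γ) (f : Polynomial K) : Prop :=
  ∀ g, w g = ⊤ ↔ f ∣ g

/-- `ε(f) ≥ ε(Q)` (for the valuation `w`), taking the conventions
`ε(f) = -∞` if `deg f = 0` (more generally, if the defining set is empty) and
`ε(f) = ∞` if `f` generates the support of `w`. -/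
def EpsGE (w : Polynomial K → WithTop Γ) (f Q : Polynomial K) : Prop :=
  IsGenSupp w f ∨
    (¬ IsGenSupp w Q ∧
      ((∀ c, ¬ ValidIdx w Q c) ∨
        ∃ b, ValidIdx w f b ∧ ∀ c, ValidIdx w Q c → RatioLE w Q c f b))

/-- `Q` is a key polynomial for `w` : `Q` is monic and
`ε(f) ≥ ε(Q)` implies `deg f ≥ deg Q`. -/
def IsKeyPoly (w : Polynomial K → WithTop Γ) (Q : Polynomial K) : Prop :=
  Q.Monic ∧ ∀ f : Polynomial K, f ≠ 0 → EpsGE w f Q → Q.natDegree ≤ f.natDegree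

/-!
For `b ∈ K̄` with `μ (b - r) ≠ μ (X - b)` at every root `r` of `f g`, each linear factor
`X - r` of `f` and `g` is `μ`-equivalent to `b - r` or to `X - b`, so `f ~ u (X - b)^s` and
`g ~ v (X - b)^t`. Equal exponents make the residue of `f / g` that of the constant `u / v`,
which `htr` forbids; distinct exponents put a nonzero multiple of `μ (X - b)` into `μ K̄`,
which is divisible because `K̄` is algebraically closed. Taking `μ (X - b)` outside `μ K̄`
shows that every `μ (X - b)` lies in `μ K̄`; taking `μ (X - b)` above all `μ (X - r)`
(so `s = t = 0`) shows that `b ↦ μ (X - b)` attains its maximum `δ` at a root `a`. Then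
`μ (X - r) = min δ (μ (a - r))` for every `r`, so by factoring, `μ p` is at most every term
`μ (c_i) + i δ` of the Taylor expansion `p = ∑ c_i (X - a)^i`; the ultrametric inequality
gives the reverse bound.
-/

namespace AddValuation

theorem exists_map_eq_of_map_eq_nsmul {F : Type*} [Field F] [IsAlgClosed F]
    (v : AddValuation F (WithTop Γ)) {n : ℕ} (hn : n ≠ 0) {x : F} {d : Γ}
    (h : v x = n • (d : WithTop Γ)) : ∃ y, v y = d := by
  obtain ⟨y, rfl⟩ := IsAlgClosed.exists_pow_nat_eq x (Nat.pos_of_ne_zero hn)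
  refine ⟨y, ?_⟩
  have hy : y ≠ 0 := by
    rintro rfl
    rw [zero_pow hn, map_zero, ← WithTop.coe_nsmul] at h
    exact WithTop.top_ne_coe h
  obtain ⟨e, he⟩ := WithTop.ne_top_iff_exists.1 ((v.ne_top_iff).2 hy)
  rw [v.map_pow, ← he, ← WithTop.coe_nsmul, ← WithTop.coe_nsmul, WithTop.coe_inj] at h
  rw [← he, nsmul_right_injective hn h]

variable {R : Type*} [CommRing R] (v : AddValuation R (WithTop Γ))

/-- The `v`-equivalence `x ~ y` of key-polynomial theory: `y` is the dominant part of `x`. -/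
def Sim (x y : R) : Prop :=
  v y < v (x - y)

variable {v}

theorem Sim.map_eq {x y : R} (h : v.Sim x y) : v x = v y :=
  v.map_eq_of_lt_sub h

theorem Sim.ne_top {x y : R} (h : v.Sim x y) : v y ≠ ⊤ :=
  ne_top_of_lt h

theorem Sim.refl {x : R} (hx : v x ≠ ⊤) : v.Sim x x := by
  rwa [Sim, sub_self, map_zero, lt_top_iff_ne_top]

theorem Sim.symm {x y : R} (h : v.Sim x y) : v.Sim y x := by
  rwa [Sim, map_sub_swap, h.map_eq]

theorem Sim.trans {x y z : R} (hxy : v.Sim x y) (hyz : v.Sim y z) : v.Sim x z := by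
  rw [Sim, ← sub_add_sub_cancel x y z]
  exact v.map_lt_add (hyz.map_eq ▸ hxy) hyz

theorem Sim.mul {x y x' y' : R} (h : v.Sim x y) (h' : v.Sim x' y') :
    v.Sim (x * x') (y * y') := by
  rw [Sim, show x * x' - y * y' = x * (x' - y') + (x - y) * y' by ring, v.map_mul]
  refine v.map_lt_add ?_ ?_
  · rw [v.map_mul, h.map_eq]
    exact WithTop.add_lt_add_left h.ne_top h'
  · rw [v.map_mul]
    exact WithTop.add_lt_add_right h'.ne_top h

theorem Sim.multiset_prod {ι : Type*} {s : Multiset ι} {x y : ι → R}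
    (h : ∀ i ∈ s, v.Sim (x i) (y i)) : v.Sim (s.map x).prod (s.map y).prod := by
  induction s using Multiset.induction_on with
  | empty => exact Sim.refl (by simp)
  | cons i s ih =>
    simp only [Multiset.map_cons, Multiset.prod_cons]
    exact (h i (Multiset.mem_cons_self i s)).mul (ih fun j hj => h j (Multiset.mem_cons_of_mem hj))

theorem ne_top_of_isUnit {u : R} (hu : IsUnit u) : v u ≠ ⊤ := by
  obtain ⟨u, rfl⟩ := hu
  intro h
  have := v.map_mul u ↑u⁻¹
  rw [Units.mul_inv, v.map_one, h, top_add] at this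
  exact WithTop.zero_ne_top this

end AddValuation

theorem qCoeff_X_sub_C (a : K) (p : K[X]) (i : ℕ) :
    qCoeff (X - C a) p i = C ((taylor a p).coeff i) := by
  have hY : (X - C a).Monic := monic_X_sub_C a
  set Q := p /ₘ (X - C a) ^ i
  have hrem : (taylor a (p %ₘ (X - C a) ^ i)).degree < i := by
    rw [degree_taylor]
    simpa [degree_pow, degree_X_sub_C] using degree_modByMonic_lt p (hY.pow i)
  have htaylor : taylor a p = taylor a (p %ₘ (X - C a) ^ i) + X ^ i * taylor a Q := by
    conv_lhs => rw [← modByMonic_add_div p ((X - C a) ^ i)]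
    rw [map_add, taylor_mul, taylor_pow, map_sub, taylor_X, taylor_C, add_sub_cancel_right]
  have hcoeff : (taylor a p).coeff i = Q.eval a := by
    rw [htaylor, coeff_add, coeff_eq_zero_of_degree_lt hrem, coeff_X_pow_mul', if_pos le_rfl,
      Nat.sub_self, taylor_coeff_zero, zero_add]
  rw [qCoeff, hcoeff, ← divByMonic_eq_div p (hY.pow i), ← modByMonic_eq_mod _ hY,
    modByMonic_X_sub_C_eq_C_eval]

section TaylorBound

variable {μ : AddValuation K[X] (WithTop Γ)} {a : K}

theorem map_le_map_C_taylor_coeff_add_of_mul_X_sub_C {p : K[X]} {r : K}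
    (hra : μ (X - C r) ≤ μ (X - C a)) (hrC : μ (X - C r) ≤ μ (C (a - r)))
    (hp : ∀ i, μ p ≤ μ (C ((taylor a p).coeff i)) + i • μ (X - C a)) (i : ℕ) :
    μ ((X - C r) * p) ≤ μ (C ((taylor a ((X - C r) * p)).coeff i)) + i • μ (X - C a) := by
  have hcoeff : (taylor a ((X - C r) * p)).coeff i =
      (X * taylor a p).coeff i + (a - r) * (taylor a p).coeff i := by
    rw [taylor_mul, map_sub, taylor_X, taylor_C, show X + C a - C r = X + C (a - r) by
      rw [C_sub]; ring, add_mul, coeff_add, coeff_C_mul]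
  have hshift : μ (X - C r) + μ p ≤ μ (C ((X * taylor a p).coeff i)) + i • μ (X - C a) := by
    cases i with
    | zero => simp
    | succ j =>
      rw [coeff_X_mul, succ_nsmul, ← add_assoc, add_comm (μ (X - C r))]
      exact add_le_add (hp j) hra
  have hscale : μ (X - C r) + μ p ≤
      μ (C ((a - r) * (taylor a p).coeff i)) + i • μ (X - C a) := by
    rw [C_mul, μ.map_mul, add_assoc]
    exact add_le_add hrC (hp i)
  calc μ ((X - C r) * p) = μ (X - C r) + μ p := μ.map_mul _ _
    _ ≤ min (μ (C ((X * taylor a p).coeff i))) (μ (C ((a - r) * (taylor a p).coeff i))) +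
          i • μ (X - C a) := by rw [← min_add_add_right]; exact le_min hshift hscale
    _ ≤ μ (C ((taylor a ((X - C r) * p)).coeff i)) + i • μ (X - C a) := by
      rw [hcoeff, C_add]
      exact add_le_add_left (μ.map_add _ _) _

theorem map_X_sub_C_le_map_C_sub (hmax : ∀ r, μ (X - C r) ≤ μ (X - C a)) (r : K) :
    μ (X - C r) ≤ μ (C (a - r)) := by
  rcases lt_or_ge (μ (C (a - r))) (μ (X - C a)) with h | h
  · rw [show X - C r = X - C a + C (a - r) by rw [C_sub]; ring, μ.map_add_eq_of_lt_right h]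
  · exact (hmax r).trans h

theorem map_le_map_C_taylor_coeff_add [IsAlgClosed K] (hmax : ∀ r, μ (X - C r) ≤ μ (X - C a))
    (p : K[X]) (i : ℕ) : μ p ≤ μ (C ((taylor a p).coeff i)) + i • μ (X - C a) := by
  suffices ∀ (c : K) (s : Multiset K) (i : ℕ), μ (C c * (s.map (X - C ·)).prod) ≤
      μ (C ((taylor a (C c * (s.map (X - C ·)).prod)).coeff i)) + i • μ (X - C a) by
    rw [(IsAlgClosed.splits p).eq_prod_roots]
    exact this _ _ i
  intro c s
  induction s using Multiset.induction_on with
  | empty => intro i; cases i <;> simp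
  | cons r s ih =>
    simp only [Multiset.map_cons, Multiset.prod_cons, mul_left_comm (C c)]
    exact map_le_map_C_taylor_coeff_add_of_mul_X_sub_C (hmax r)
      (map_X_sub_C_le_map_C_sub hmax r) ih

theorem trunc_X_sub_C_eq [IsAlgClosed K] (hmax : ∀ r, μ (X - C r) ≤ μ (X - C a)) (p : K[X]) :
    trunc μ (X - C a) p = μ p := by
  simp only [trunc, qCoeff_X_sub_C]
  apply le_antisymm
  · conv_rhs => rw [← sum_taylor_eq p a, Polynomial.sum_def]
    refine μ.map_le_sum fun i hi => Finset.inf_le (Finset.mem_range_succ_iff.2 ?_)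
    exact natDegree_taylor p a ▸ le_natDegree_of_mem_supp i hi
  · refine Finset.le_inf fun i _ => ?_
    rw [μ.map_mul, μ.map_pow]
    exact map_le_map_C_taylor_coeff_add hmax p i

end TaylorBound

section ResidueTranscendental

variable {μ : AddValuation K[X] (WithTop Γ)} {f g : K[X]}

theorem sim_C_mul_X_sub_C_pow [IsAlgClosed K] {p : K[X]} (hp : p ≠ 0) (b : K)
    (hsep : ∀ r ∈ p.roots, μ (C (b - r)) ≠ μ (X - C b)) :
    ∃ u, μ.Sim p
      (C u * (X - C b) ^ (p.roots.filter fun r => μ (X - C b) < μ (C (b - r))).card) := by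
  set near := fun r => μ (X - C b) < μ (C (b - r))
  set dominant := fun r => if near r then X - C b else C (b - r)
  have hroot : ∀ r ∈ p.roots, μ.Sim (X - C r) (dominant r) := by
    intro r hr
    have hX : X - C r = X - C b + C (b - r) := by rw [C_sub]; ring
    by_cases h : near r
    · rwa [show dominant r = X - C b from if_pos h, AddValuation.Sim, hX, add_sub_cancel_left]
    · rw [show dominant r = C (b - r) from if_neg h, AddValuation.Sim, hX, add_sub_cancel_right]
      exact lt_of_le_of_ne (not_lt.1 h) (hsep r hr)
  have hprod : (p.roots.map dominant).prod = (X - C b) ^ (p.roots.filter near).card *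
      C ((p.roots.filter fun r => ¬ near r).map (b - ·)).prod := by
    conv_lhs => rw [← Multiset.filter_add_not near p.roots]
    rw [Multiset.map_add, Multiset.prod_add, map_multiset_prod, Multiset.map_map]
    congr 1
    · rw [Multiset.map_congr rfl fun r hr => if_pos (Multiset.of_mem_filter hr),
        Multiset.map_const', Multiset.prod_replicate]
    · congr 1
      exact Multiset.map_congr rfl fun r hr => if_neg (Multiset.mem_filter.1 hr).2
  refine ⟨p.leadingCoeff * ((p.roots.filter fun r => ¬ near r).map (b - ·)).prod, ?_⟩
  have hlc : μ (C p.leadingCoeff) ≠ ⊤ :=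
    μ.ne_top_of_isUnit (isUnit_C.2 (leadingCoeff_ne_zero.2 hp).isUnit)
  have hsim := (AddValuation.Sim.refl hlc).mul (AddValuation.Sim.multiset_prod hroot)
  rw [← (IsAlgClosed.splits p).eq_prod_roots, hprod] at hsim
  convert hsim using 1
  rw [C_mul]
  ring

theorem map_C_div_eq_of_sim {z w : K[X]} {u v : K} (hfg : μ f = μ g)
    (hf : μ.Sim f (C u * z)) (hg : μ.Sim g (C v * z * w)) : μ (C (u / v)) = μ w := by
  have hvz : μ (C v * z) ≠ ⊤ := by
    have := hg.ne_top
    rw [μ.map_mul] at this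
    exact (WithTop.add_ne_top.1 this).1
  have hv : v ≠ 0 := by rintro rfl; simp at hvz
  refine WithTop.add_right_cancel hvz ?_
  rw [← μ.map_mul, ← mul_assoc, ← C_mul, div_mul_cancel₀ u hv, ← hf.map_eq, hfg,
    hg.map_eq, μ.map_mul, add_comm]

theorem exists_sim_C_mul_of_sim {z : K[X]} {u v : K} (hfg : μ f = μ g)
    (hf : μ.Sim f (C u * z)) (hg : μ.Sim g (C v * z)) :
    ∃ e, μ (C e) = 0 ∧ μ.Sim f (C e * g) := by
  have he : μ (C (u / v)) = 0 :=
    (map_C_div_eq_of_sim hfg hf (by rwa [mul_one])).trans μ.map_one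
  have hv : v ≠ 0 := by rintro rfl; simp at he
  refine ⟨u / v, he, hf.trans ?_⟩
  rw [show C u * z = C (u / v) * (C v * z) by rw [← mul_assoc, ← C_mul, div_mul_cancel₀ u hv]]
  exact (AddValuation.Sim.refl (by simp [he])).mul hg.symm

theorem exists_map_C_eq_of_sim_pow [IsAlgClosed K] {y : K[X]} {u v : K} {s t : ℕ}
    (hfg : μ f = μ g) (hst : s < t) (hf : μ.Sim f (C u * y ^ s)) (hg : μ.Sim g (C v * y ^ t)) :
    ∃ c, μ (C c) = μ y := by
  obtain ⟨m, rfl⟩ := Nat.exists_eq_add_of_lt hst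
  rw [add_assoc, pow_add, ← mul_assoc] at hg
  have hval := map_C_div_eq_of_sim hfg hf hg
  have hy : μ y ≠ ⊤ := by
    have := hg.ne_top
    rw [pow_succ, ← mul_assoc, μ.map_mul] at this
    exact (WithTop.add_ne_top.1 this).2
  obtain ⟨d, hd⟩ := WithTop.ne_top_iff_exists.1 hy
  rw [μ.map_pow, ← hd] at hval
  obtain ⟨c, hc⟩ := (μ.comap C).exists_map_eq_of_map_eq_nsmul m.succ_ne_zero hval
  exact ⟨c, hc.trans hd⟩

theorem exists_mem_roots_map_X_sub_C_le [IsAlgClosed K] (hf : f ≠ 0) (hg : g ≠ 0)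
    (hfg : μ f = μ g) (hres : ∀ e : K, μ (C e) = 0 → ¬ μ.Sim f (C e * g)) (b : K) :
    ∃ r ∈ f.roots + g.roots, μ (X - C b) ≤ μ (X - C r) := by
  by_contra! hclose
  have hfar : ∀ r ∈ f.roots + g.roots, μ (C (b - r)) < μ (X - C b) := by
    intro r hr
    by_contra! hle
    have := μ.map_le_add le_rfl hle
    rw [show X - C b + C (b - r) = X - C r by rw [C_sub]; ring] at this
    exact (hclose r hr).not_ge this
  have hconst : ∀ p ≠ 0, (∀ r ∈ p.roots, μ (C (b - r)) < μ (X - C b)) →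
      ∃ u, μ.Sim p (C u * (X - C b) ^ 0) := by
    intro p hp hpfar
    obtain ⟨u, hu⟩ := sim_C_mul_X_sub_C_pow hp b fun r hr => (hpfar r hr).ne
    rw [Multiset.filter_eq_nil.2 fun r hr => (hpfar r hr).not_gt] at hu
    exact ⟨u, hu⟩
  obtain ⟨u, hu⟩ := hconst f hf fun r hr => hfar r (Multiset.mem_add.2 (Or.inl hr))
  obtain ⟨v, hv⟩ := hconst g hg fun r hr => hfar r (Multiset.mem_add.2 (Or.inr hr))
  obtain ⟨e, he, hsim⟩ := exists_sim_C_mul_of_sim hfg hu hv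
  exact hres e he hsim

theorem exists_map_C_eq_map_X_sub_C [IsAlgClosed K] (hf : f ≠ 0) (hg : g ≠ 0)
    (hfg : μ f = μ g) (hres : ∀ e : K, μ (C e) = 0 → ¬ μ.Sim f (C e * g)) (b : K) :
    ∃ c, μ (C c) = μ (X - C b) := by
  by_contra! hval
  obtain ⟨u, hu⟩ := sim_C_mul_X_sub_C_pow hf b fun r _ => hval (b - r)
  obtain ⟨v, hv⟩ := sim_C_mul_X_sub_C_pow hg b fun r _ => hval (b - r)
  rcases lt_trichotomy (f.roots.filter fun r => μ (X - C b) < μ (C (b - r))).card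
    (g.roots.filter fun r => μ (X - C b) < μ (C (b - r))).card with hlt | heq | hgt
  · obtain ⟨c, hc⟩ := exists_map_C_eq_of_sim_pow hfg hlt hu hv
    exact hval c hc
  · rw [heq] at hu
    obtain ⟨e, he, hsim⟩ := exists_sim_C_mul_of_sim hfg hu hv
    exact hres e he hsim
  · obtain ⟨c, hc⟩ := exists_map_C_eq_of_sim_pow hfg.symm hgt hv hu
    exact hval c hc

theorem exists_forall_map_X_sub_C_le [IsAlgClosed K] (hf : f ≠ 0) (hg : g ≠ 0)
    (hfg : μ f = μ g) (hres : ∀ e : K, μ (C e) = 0 → ¬ μ.Sim f (C e * g)) :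
    ∃ a, ∀ b, μ (X - C b) ≤ μ (X - C a) := by
  have hclose := exists_mem_roots_map_X_sub_C_le hf hg hfg hres
  obtain ⟨r₀, hr₀, -⟩ := hclose 0
  obtain ⟨a, -, ha⟩ := Multiset.exists_max_image (s := f.roots + g.roots)
    (fun r => μ (X - C r)) (fun h => by simp [h] at hr₀)
  refine ⟨a, fun b => ?_⟩
  obtain ⟨r, hr, hbr⟩ := hclose b
  exact hbr.trans (ha r hr)

end ResidueTranscendental

/-- Residue-transcendence is encoded by `f / g`: by `htr`, its residue satisfies no nontrivial
polynomial relation over the residue field of `K`. -/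
theorem stmt13 [IsAlgClosed K] (μ : AddValuation (Polynomial K) (WithTop Γ))
    (hKrull : ∀ p : Polynomial K, p ≠ 0 → μ p ≠ ⊤)
    (f g : Polynomial K) (hf : f ≠ 0) (hg : g ≠ 0) (hfg : μ f = μ g)
    (htr : ∀ (s : ℕ) (b : ℕ → K), (∀ i, i ≤ s → 0 ≤ μ (C (b i))) →
      μ (g ^ s) < μ (∑ i ∈ Finset.range (s + 1), C (b i) * f ^ i * g ^ (s - i)) →
      ∀ i, i ≤ s → 0 < μ (C (b i))) :
    ∃ a : K, (∃ c : K, c ≠ 0 ∧ μ (X - C a) = μ (C c)) ∧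
      ∀ p : Polynomial K, trunc (⇑μ) (X - C a) p = μ p := by
  have hres : ∀ e : K, μ (C e) = 0 → ¬ μ.Sim f (C e * g) := by
    intro e he hsim
    have hsum : ∑ i ∈ Finset.range 2, C (if i = 0 then -e else 1) * f ^ i * g ^ (1 - i) =
        f - C e * g := by
      simp [Finset.sum_range_succ]
      ring
    have hpos := htr 1 (fun i => if i = 0 then -e else 1)
      (fun i _ => by split_ifs <;> simp [he])
      (by rwa [hsum, pow_one, ← zero_add (μ g), ← he, ← μ.map_mul]) 1 le_rfl
    simp at hpos
  obtain ⟨a, hmax⟩ := exists_forall_map_X_sub_C_le hf hg hfg hres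
  obtain ⟨c, hc⟩ := exists_map_C_eq_map_X_sub_C hf hg hfg hres a
  refine ⟨a, ⟨c, ?_, hc.symm⟩, trunc_X_sub_C_eq hmax⟩
  rintro rfl
  exact hKrull _ (X_sub_C_ne_zero a) (by rw [← hc, C_0, μ.map_zero])
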